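/- arXiv:2405.12748 — 3 statements merged into one kernel-verified Lean document; each statement's English description precedes it below -/
import Mathlib

section
/- Let a, b ∈ ℝ, let C be a constant skew-symmetric n×n real matrix, let 𝕌 ⊆ ℝ be a nonempty open interval on which a − bu ≠ 0, and fix u₁ ∈ 𝕌. Suppose P : 𝕌 → Sym(n,ℝ) is smooth and satisfies (a − bu)P'(u) − 2b·P(u) + P(u)C − CP(u) = 0 for all u ∈ 𝕌. Define t : 𝕌 → ℝ by t(u) = ∫_{u₁}^{u} ds/(a − bs). Then for all u ∈ 𝕌: P(u) = (a − bu)^{−2} · e^{t(u)C} · ((a − bu₁)² P(u₁)) · e^{−t(u)C}. -/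
/-!
With `g u = a - b u`, the equation says that `X = g² • P` solves the Lax-type equation
`X' = t' • (C X - X C)`, since `t' = g⁻¹`. Such equations are solved by conjugation:
`exp (-t C) X exp (t C)` has zero derivative, hence is constant on the interval, and evaluating
at `u₁`, where `t` vanishes, gives the formula.
-/

open Matrix

attribute [local instance] Matrix.normedAddCommGroup Matrix.normedSpace

noncomputable section

section MatrixCalculus

variable {m : Type*} [Fintype m] [DecidableEq m]

theorem HasDerivAt.matrix_mul {f g : ℝ → Matrix m m ℝ} {f' g' : Matrix m m ℝ} {x : ℝ}
    (hf : HasDerivAt f f' x) (hg : HasDerivAt g g' x) :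
    HasDerivAt (fun y => f y * g y) (f' * g x + f x * g') x := by
  open scoped Norms.Operator in exact hf.mul hg

theorem Matrix.hasDerivAt_exp_smul_const' (A : Matrix m m ℝ) (t : ℝ) :
    HasDerivAt (fun s : ℝ => NormedSpace.exp (s • A)) (A * NormedSpace.exp (t • A)) t := by
  open scoped Norms.Operator in exact _root_.hasDerivAt_exp_smul_const' A t

theorem Matrix.exp_mul_exp_neg (A : Matrix m m ℝ) :
    NormedSpace.exp A * NormedSpace.exp (-A) = 1 := by
  rw [← Matrix.exp_add_of_commute _ _ (Commute.refl A).neg_right, add_neg_cancel,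
    NormedSpace.exp_zero]

theorem HasDerivAt.exp_neg_smul_mul_mul_exp_smul (C : Matrix m m ℝ) {X : ℝ → Matrix m m ℝ}
    {X' : Matrix m m ℝ} {φ : ℝ → ℝ} {φ' x : ℝ} (hX : HasDerivAt X X' x)
    (hφ : HasDerivAt φ φ' x) :
    HasDerivAt (fun y => NormedSpace.exp (-(φ y • C)) * X y * NormedSpace.exp (φ y • C))
      (NormedSpace.exp (-(φ x • C)) * (X' - φ' • (C * X x - X x * C)) *
        NormedSpace.exp (φ x • C)) x := by
  have hE := (Matrix.hasDerivAt_exp_smul_const' C (φ x)).scomp x hφ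
  have hF := (Matrix.hasDerivAt_exp_smul_const' (-C) (φ x)).scomp x hφ
  simp only [Function.comp_def, smul_neg] at hE hF
  have hCF : C * NormedSpace.exp (-(φ x • C)) = NormedSpace.exp (-(φ x • C)) * C :=
    ((Commute.refl C).smul_right (φ x)).neg_right.exp_right.eq
  convert (hF.matrix_mul hX).matrix_mul hE using 1
  simp only [neg_mul, hCF, smul_neg, mul_sub, sub_mul, mul_smul_comm, smul_mul_assoc, mul_assoc,
    add_mul]
  module

theorem eq_exp_smul_mul_mul_exp_neg_smul_of_hasDerivAt {U : Set ℝ} (hUo : IsOpen U)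
    (hUc : IsPreconnected U) (C : Matrix m m ℝ) {X X' : ℝ → Matrix m m ℝ} {φ φ' : ℝ → ℝ}
    (hX : ∀ x ∈ U, HasDerivAt X (X' x) x) (hφ : ∀ x ∈ U, HasDerivAt φ (φ' x) x)
    (hLax : ∀ x ∈ U, X' x = φ' x • (C * X x - X x * C)) {x₀ : ℝ} (hx₀ : x₀ ∈ U) (hφx₀ : φ x₀ = 0)
    {x : ℝ} (hx : x ∈ U) :
    X x = NormedSpace.exp (φ x • C) * X x₀ * NormedSpace.exp (-(φ x • C)) := by
  set Q := fun y => NormedSpace.exp (-(φ y • C)) * X y * NormedSpace.exp (φ y • C)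
  have hQ' : ∀ y ∈ U, HasDerivAt Q 0 y := fun y hy => by
    simpa [hLax y hy] using (hX y hy).exp_neg_smul_mul_mul_exp_smul C (hφ y hy)
  have hQ : Q x = Q x₀ := hUo.is_const_of_deriv_eq_zero hUc
    (fun y hy => (hQ' y hy).differentiableAt.differentiableWithinAt)
    (fun y hy => (hQ' y hy).deriv) hx hx₀
  have hQx₀ : Q x₀ = X x₀ := by simp [Q, hφx₀]
  rw [← hQx₀, ← hQ]
  simp only [Q, ← mul_assoc, Matrix.exp_mul_exp_neg, one_mul]
  rw [mul_assoc, Matrix.exp_mul_exp_neg, mul_one]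

end MatrixCalculus

theorem hasDerivAt_intervalIntegral_of_continuousOn {E : Type*} [NormedAddCommGroup E]
    [NormedSpace ℝ E] [CompleteSpace E] {f : ℝ → E} {U : Set ℝ} (hUo : IsOpen U)
    (hUc : U.OrdConnected) (hf : ContinuousOn f U) {a x : ℝ} (ha : a ∈ U) (hx : x ∈ U) :
    HasDerivAt (fun u => ∫ s in a..u, f s) (f x) x :=
  intervalIntegral.integral_hasDerivAt_right
    ((hf.mono (hUc.uIcc_subset ha hx)).intervalIntegrable)
    (hf.stronglyMeasurableAtFilter hUo x hx) (hf.continuousAt (hUo.mem_nhds hx))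

theorem stmt4_general (n : ℕ)
    (a b : ℝ) (C : Matrix (Fin n) (Fin n) ℝ)
    (U : Set ℝ) (hUopen : IsOpen U) (hUconv : Convex ℝ U)
    (hnz : ∀ u ∈ U, a - b * u ≠ 0)
    (u₁ : ℝ) (hu₁ : u₁ ∈ U)
    (P : ℝ → Matrix (Fin n) (Fin n) ℝ)
    (hPsmooth : ContDiffOn ℝ (⊤ : ℕ∞) P U)
    (heq : ∀ u ∈ U,
      (a - b * u) • deriv P u - (2 * b) • P u + P u * C - C * P u = 0)
    (t : ℝ → ℝ) (ht : ∀ u, t u = ∫ s in u₁..u, (a - b * s)⁻¹) :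
    ∀ u ∈ U, P u = ((a - b * u) ^ 2)⁻¹ •
      (NormedSpace.exp (t u • C) * (((a - b * u₁) ^ 2) • P u₁) *
        NormedSpace.exp (-(t u • C))) := by
  have ht' : ∀ v ∈ U, HasDerivAt t (a - b * v)⁻¹ v := fun v hv => by
    rw [funext ht]
    exact hasDerivAt_intervalIntegral_of_continuousOn hUopen hUconv.ordConnected
      (by fun_prop (disch := assumption)) hu₁ hv
  have hP : ∀ v ∈ U, HasDerivAt P (deriv P v) v := fun v hv =>
    ((hPsmooth.differentiableOn (by simp)).differentiableAt (hUopen.mem_nhds hv)).hasDerivAt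
  have hX : ∀ v ∈ U, HasDerivAt (fun v => (a - b * v) ^ 2 • P v)
      ((a - b * v) ^ 2 • deriv P v - (2 * b * (a - b * v)) • P v) v := fun v hv => by
    have hg2 : HasDerivAt (fun v => (a - b * v) ^ 2) (-(2 * b * (a - b * v))) v :=
      ((((hasDerivAt_id v).const_mul b).const_sub a).pow 2).congr_deriv (by norm_num; ring)
    exact (hg2.smul (hP v hv)).congr_deriv (by module)
  have hLax : ∀ v ∈ U, (a - b * v) ^ 2 • deriv P v - (2 * b * (a - b * v)) • P v =
      (a - b * v)⁻¹ • (C * ((a - b * v) ^ 2 • P v) - ((a - b * v) ^ 2 • P v) * C) :=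
    fun v hv => calc
      _ = (a - b * v) • ((a - b * v) • deriv P v - (2 * b) • P v + P v * C - C * P v)
          + (a - b * v) • (C * P v - P v * C) := by module
      _ = (a - b * v) • (C * P v - P v * C) := by rw [heq v hv, smul_zero, zero_add]
      _ = _ := by
        rw [mul_smul_comm, smul_mul_assoc, ← smul_sub, smul_smul, sq, ← mul_assoc,
          inv_mul_cancel₀ (hnz v hv), one_mul]
  intro u hu
  have hXu := eq_exp_smul_mul_mul_exp_neg_smul_of_hasDerivAt hUopen hUconv.isPreconnected C hX ht'
    hLax hu₁ (by simp [ht]) hu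
  rw [← hXu, smul_smul, inv_mul_cancel₀ (pow_ne_zero 2 (hnz u hu)), one_smul]

/-- if `(a − bu)P' − 2bP + [P,C] = 0` on an interval `𝕌` where `a − bu ≠ 0`,
with `C` constant skew, then with `t(u) = ∫_{u₁}^u ds/(a−bs)` one has
`P(u) = (a−bu)⁻² e^{t(u)C} ((a−bu₁)² P(u₁)) e^{−t(u)C}`. -/
theorem stmt4 (n : ℕ) (hn : 1 ≤ n)
    (a b : ℝ) (C : Matrix (Fin n) (Fin n) ℝ) (hC : Cᵀ = -C)
    (U : Set ℝ) (hUopen : IsOpen U) (hUconv : Convex ℝ U) (hUne : U.Nonempty)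
    (hnz : ∀ u ∈ U, a - b * u ≠ 0)
    (u₁ : ℝ) (hu₁ : u₁ ∈ U)
    (P : ℝ → Matrix (Fin n) (Fin n) ℝ)
    (hPsmooth : ContDiffOn ℝ (⊤ : ℕ∞) P U)
    (hPsymm : ∀ u ∈ U, (P u)ᵀ = P u)
    (heq : ∀ u ∈ U,
      (a - b * u) • deriv P u - (2 * b) • P u + P u * C - C * P u = 0)
    (t : ℝ → ℝ) (ht : ∀ u, t u = ∫ s in u₁..u, (a - b * s)⁻¹) :
    ∀ u ∈ U, P u = ((a - b * u) ^ 2)⁻¹ •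
      (NormedSpace.exp (t u • C) * (((a - b * u₁) ^ 2) • P u₁) *
        NormedSpace.exp (-(t u • C))) :=
  stmt4_general n a b C U hUopen hUconv hnz u₁ hu₁ P hPsmooth heq t ht
end
end

section
/- Let p : 𝕌 → Sym(n,ℝ) be smooth, and let q, r : 𝕌 → ℝⁿ be smooth solutions of q''(u) + p(u)q(u) = 0 and r''(u) + p(u)r(u) = 0. Then: (i) the Wronskian-type function u ↦ q(u)ᵀr'(u) − r(u)ᵀq'(u) is constant on 𝕌; denote its value ω(q,r). (ii) The vector fields X_q(u,v,x) = (0, xᵀq'(u), q(u)) and X_r(u,v,x) = (0, xᵀr'(u), r(u)) on 𝕄 = 𝕌×ℝ×ℝⁿ satisfy [X_q, X_r] = ω(q,r)·H, where H is the constant vector field H(u,v,x) = (0,1,0) (so the fields H and X_q span a Heisenberg Lie algebra). -/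
open Matrix

attribute [local instance] Matrix.normedAddCommGroup Matrix.normedSpace

noncomputable section

/-- The manifold `ℝ × ℝ × ℝⁿ`, with points `(u, v, x)`. -/
abbrev Mfd (n : ℕ) := ℝ × ℝ × (Fin n → ℝ)

/-- Lie bracket of vector fields. -/
def bracket (n : ℕ) (V W : Mfd n → Mfd n) : Mfd n → Mfd n := fun m =>
  fderiv ℝ W m (V m) - fderiv ℝ V m (W m)

/-! Differentiating, `(qᵀr' − rᵀq')' = qᵀr'' − rᵀq'' = rᵀp q − qᵀp r`, which vanishes because `p`
is symmetric; on an interval the Wronskian is therefore constant. The fields `X_q` have no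
`u`-component, so in the bracket each field is differentiated only along `x`, where the other is
linear with slope `q'`; hence `[X_q, X_r] = (0, qᵀr' − rᵀq', 0)`. -/

section DotProduct

variable {ι 𝕜 E : Type*} [Fintype ι] [NontriviallyNormedField 𝕜]
  [NormedAddCommGroup E] [NormedSpace 𝕜 E]

theorem HasDerivAt.dotProduct {f g : 𝕜 → ι → 𝕜} {f' g' : ι → 𝕜} {x : 𝕜}
    (hf : HasDerivAt f f' x) (hg : HasDerivAt g g' x) :
    HasDerivAt (fun y => f y ⬝ᵥ g y) (f' ⬝ᵥ g x + f x ⬝ᵥ g') x := by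
  have h := HasDerivAt.fun_sum (u := Finset.univ) fun i _ =>
    (hasDerivAt_pi.1 hf i).fun_mul (hasDerivAt_pi.1 hg i)
  simpa only [_root_.dotProduct, Finset.sum_add_distrib] using h

theorem DifferentiableAt.dotProduct {f g : E → ι → 𝕜} {x : E}
    (hf : DifferentiableAt 𝕜 f x) (hg : DifferentiableAt 𝕜 g x) :
    DifferentiableAt 𝕜 (fun y => f y ⬝ᵥ g y) x := by
  simp only [_root_.dotProduct]
  fun_prop

end DotProduct

theorem Matrix.IsSymm.dotProduct_mulVec_comm {ι R : Type*} [Fintype ι] [CommSemiring R]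
    {A : Matrix ι ι R} (hA : A.IsSymm) (v w : ι → R) :
    v ⬝ᵥ A *ᵥ w = w ⬝ᵥ A *ᵥ v := by
  rw [dotProduct_mulVec, ← mulVec_transpose, hA, dotProduct_comm]

theorem ContDiffOn.differentiableAt_deriv {F : Type*} [NormedAddCommGroup F] [NormedSpace ℝ F]
    {f : ℝ → F} {U : Set ℝ} {n : WithTop ℕ∞}
    (hf : ContDiffOn ℝ n f U) (hn : 2 ≤ n) (hU : IsOpen U) {u : ℝ} (hu : u ∈ U) :
    DifferentiableAt ℝ (deriv f) u :=
  ((hf.deriv_of_isOpen hU (m := 1) (by simpa [one_add_one_eq_two] using hn)).differentiableOn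
    one_ne_zero).differentiableAt (hU.mem_nhds hu)

section Wronskian

variable {ι : Type*} [Fintype ι]

def wronskian (q r : ℝ → ι → ℝ) (u : ℝ) : ℝ :=
  q u ⬝ᵥ deriv r u - r u ⬝ᵥ deriv q u

variable {q r : ℝ → ι → ℝ}

theorem hasDerivAt_wronskian {u : ℝ} (hq : DifferentiableAt ℝ q u) (hr : DifferentiableAt ℝ r u)
    (hq' : DifferentiableAt ℝ (deriv q) u) (hr' : DifferentiableAt ℝ (deriv r) u) :
    HasDerivAt (wronskian q r) (q u ⬝ᵥ deriv (deriv r) u - r u ⬝ᵥ deriv (deriv q) u) u := by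
  refine ((hq.hasDerivAt.dotProduct hr'.hasDerivAt).sub
    (hr.hasDerivAt.dotProduct hq'.hasDerivAt)).congr_deriv ?_
  rw [dotProduct_comm (deriv r u)]
  ring

theorem IsOpen.exists_wronskian_eq_const {U : Set ℝ} (hU : IsOpen U) (hU' : IsPreconnected U)
    {p : ℝ → Matrix ι ι ℝ} (hp : ∀ u ∈ U, (p u).IsSymm)
    (hq : ∀ u ∈ U, DifferentiableAt ℝ q u) (hr : ∀ u ∈ U, DifferentiableAt ℝ r u)
    (hq' : ∀ u ∈ U, DifferentiableAt ℝ (deriv q) u) (hr' : ∀ u ∈ U, DifferentiableAt ℝ (deriv r) u)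
    (hqode : ∀ u ∈ U, deriv (deriv q) u + p u *ᵥ q u = 0)
    (hrode : ∀ u ∈ U, deriv (deriv r) u + p u *ᵥ r u = 0) :
    ∃ c, ∀ u ∈ U, wronskian q r u = c := by
  have hW : ∀ u ∈ U, HasDerivAt (wronskian q r) 0 u := fun u hu => by
    refine (hasDerivAt_wronskian (hq u hu) (hr u hu) (hq' u hu) (hr' u hu)).congr_deriv ?_
    rw [eq_neg_of_add_eq_zero_left (hqode u hu), eq_neg_of_add_eq_zero_left (hrode u hu),
      dotProduct_neg, dotProduct_neg, (hp u hu).dotProduct_mulVec_comm, sub_self]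
  exact hU.exists_is_const_of_deriv_eq_zero hU'
    (fun u hu => (hW u hu).differentiableAt.differentiableWithinAt) fun u hu => (hW u hu).deriv

end Wronskian

section HeisenbergField

variable {n : ℕ}

def heisenbergField (q : ℝ → Fin n → ℝ) : Mfd n → Mfd n :=
  fun m => (0, m.2.2 ⬝ᵥ deriv q m.1, q m.1)

variable {q r : ℝ → Fin n → ℝ}

theorem differentiableAt_heisenbergField {m : Mfd n} (hq : DifferentiableAt ℝ q m.1)
    (hq' : DifferentiableAt ℝ (deriv q) m.1) :
    DifferentiableAt ℝ (heisenbergField q) m := by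
  have hq₁ : DifferentiableAt ℝ (fun m : Mfd n => q m.1) m := hq.comp m differentiableAt_fst
  have hq₁' : DifferentiableAt ℝ (fun m : Mfd n => deriv q m.1) m :=
    hq'.comp m differentiableAt_fst
  exact (differentiableAt_const 0).prodMk
    ((differentiableAt_snd.snd.dotProduct hq₁').prodMk hq₁)

theorem fderiv_heisenbergField_apply {m : Mfd n} (hq : DifferentiableAt ℝ q m.1)
    (hq' : DifferentiableAt ℝ (deriv q) m.1) (a : ℝ) (b : Fin n → ℝ) :
    fderiv ℝ (heisenbergField q) m (0, a, b) = (0, b ⬝ᵥ deriv q m.1, 0) := by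
  rw [← (differentiableAt_heisenbergField hq hq').lineDeriv_eq_fderiv]
  refine HasLineDerivAt.lineDeriv ?_
  have h : HasDerivAt (fun t : ℝ => (m.2.2 + t • b) ⬝ᵥ deriv q m.1) (b ⬝ᵥ deriv q m.1) 0 := by
    simpa using ((hasDerivAt_id (0 : ℝ)).smul_const b |>.const_add m.2.2).dotProduct
      (hasDerivAt_const (0 : ℝ) (deriv q m.1))
  simpa [HasLineDerivAt, heisenbergField] using
    (hasDerivAt_const (0 : ℝ) (0 : ℝ)).prodMk (h.prodMk (hasDerivAt_const (0 : ℝ) (q m.1)))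

theorem bracket_heisenbergField {m : Mfd n} (hq : DifferentiableAt ℝ q m.1)
    (hr : DifferentiableAt ℝ r m.1) (hq' : DifferentiableAt ℝ (deriv q) m.1)
    (hr' : DifferentiableAt ℝ (deriv r) m.1) :
    bracket n (heisenbergField q) (heisenbergField r) m = (0, wronskian q r m.1, 0) := by
  simp only [bracket, heisenbergField]
  rw [fderiv_heisenbergField_apply hr hr', fderiv_heisenbergField_apply hq hq']
  simp [wronskian]

end HeisenbergField

theorem stmt17_general (n : ℕ)
    (U : Set ℝ) (hUopen : IsOpen U) (hUconv : Convex ℝ U)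
    (p : ℝ → Matrix (Fin n) (Fin n) ℝ)
    (hpsymm : ∀ u ∈ U, (p u)ᵀ = p u)
    (q r : ℝ → (Fin n → ℝ))
    (hqsmooth : ContDiffOn ℝ (⊤ : ℕ∞) q U)
    (hrsmooth : ContDiffOn ℝ (⊤ : ℕ∞) r U)
    (hqode : ∀ u ∈ U, deriv (deriv q) u + p u *ᵥ q u = 0)
    (hrode : ∀ u ∈ U, deriv (deriv r) u + p u *ᵥ r u = 0) :
    ∃ c : ℝ,
      (∀ u ∈ U, q u ⬝ᵥ deriv r u - r u ⬝ᵥ deriv q u = c) ∧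
      (∀ m ∈ {m : Mfd n | m.1 ∈ U},
        bracket n
          (fun m : Mfd n => ((0 : ℝ), m.2.2 ⬝ᵥ deriv q m.1, q m.1))
          (fun m : Mfd n => ((0 : ℝ), m.2.2 ⬝ᵥ deriv r m.1, r m.1)) m
        = ((0 : ℝ), c, (0 : Fin n → ℝ))) := by
  have h2 : (2 : WithTop ℕ∞) ≤ (⊤ : ℕ∞) := WithTop.coe_le_coe.2 le_top
  have hq u (hu : u ∈ U) : DifferentiableAt ℝ q u :=
    (hqsmooth.differentiableOn (by simp)).differentiableAt (hUopen.mem_nhds hu)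
  have hr u (hu : u ∈ U) : DifferentiableAt ℝ r u :=
    (hrsmooth.differentiableOn (by simp)).differentiableAt (hUopen.mem_nhds hu)
  have hq' u (hu : u ∈ U) := hqsmooth.differentiableAt_deriv h2 hUopen hu
  have hr' u (hu : u ∈ U) := hrsmooth.differentiableAt_deriv h2 hUopen hu
  obtain ⟨c, hc⟩ := hUopen.exists_wronskian_eq_const hUconv.isPreconnected hpsymm hq hr hq' hr'
    hqode hrode
  refine ⟨c, hc, fun m (hm : m.1 ∈ U) => ?_⟩
  rw [← hc m.1 hm]
  exact bracket_heisenbergField (hq _ hm) (hr _ hm) (hq' _ hm) (hr' _ hm)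

/-- for Jacobi fields `q`, `r` of `p`, the Wronskian
`qᵀr' − rᵀq'` is constant, with value `ω(q,r)`, and the Heisenberg fields satisfy
`[X_q, X_r] = ω(q,r)·H` where `H = (0,1,0)`. -/
theorem stmt17 (n : ℕ) (hn : 1 ≤ n)
    (U : Set ℝ) (hUopen : IsOpen U) (hUconv : Convex ℝ U) (hUne : U.Nonempty)
    (p : ℝ → Matrix (Fin n) (Fin n) ℝ)
    (hpsmooth : ContDiffOn ℝ (⊤ : ℕ∞) p U)
    (hpsymm : ∀ u ∈ U, (p u)ᵀ = p u)
    (q r : ℝ → (Fin n → ℝ))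
    (hqsmooth : ContDiffOn ℝ (⊤ : ℕ∞) q U)
    (hrsmooth : ContDiffOn ℝ (⊤ : ℕ∞) r U)
    (hqode : ∀ u ∈ U, deriv (deriv q) u + p u *ᵥ q u = 0)
    (hrode : ∀ u ∈ U, deriv (deriv r) u + p u *ᵥ r u = 0) :
    ∃ c : ℝ,
      (∀ u ∈ U, q u ⬝ᵥ deriv r u - r u ⬝ᵥ deriv q u = c) ∧
      (∀ m ∈ {m : Mfd n | m.1 ∈ U},
        bracket n
          (fun m : Mfd n => ((0 : ℝ), m.2.2 ⬝ᵥ deriv q m.1, q m.1))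
          (fun m : Mfd n => ((0 : ℝ), m.2.2 ⬝ᵥ deriv r m.1, r m.1)) m
        = ((0 : ℝ), c, (0 : Fin n → ℝ))) :=
  stmt17_general n U hUopen hUconv p hpsymm q r hqsmooth hrsmooth hqode hrode
end
end

section
/- Let 𝕌 ⊆ ℝ be a nonempty open interval, let p̃ : 𝕌 → Sym(n,ℝ) be smooth with tr(p̃(u)) = 0 for all u, let W be a constant skew-symmetric n×n matrix, and let w : 𝕌 → ℝ be smooth, satisfying w(u)p̃'(u) + 2w'(u)p̃(u) + p̃(u)W − Wp̃(u) = 0 for all u ∈ 𝕌. Then: (i) the function u ↦ w(u)⁴·tr(p̃(u)²) is constant on 𝕌. (ii) If moreover P : 𝕌 → ℝ is smooth with w''' + 4Pw' + 2P'w = 0 on 𝕌, and p̃(u) ≠ 0 for every u in some nonempty open subinterval 𝕌₀ ⊆ 𝕌, and the constant value of w⁴·tr(p̃²) is zero, then w(u) = 0 for every u ∈ 𝕌. -/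
/-! Multiplying the equation by `p̃` and taking traces kills the commutator term, since
`tr (p̃ (p̃ W - W p̃)) = 0` by cyclicity, and leaves `w tr(p̃ p̃') + 2 w' tr(p̃²) = 0`, which is
`(w⁴ tr p̃²)' = 0` divided by `2 w³`. For (ii), `tr(p̃²) ≠ 0` on `𝕌₀` forces `w = 0` there, so
`w`, `w'`, `w''` vanish at a point of `𝕌₀`; writing the third-order equation as a linear system
for `(w, w', w'')`, uniqueness for linear ODEs with continuous coefficients (the set where the
solution vanishes is open and relatively closed) propagates `w = 0` to the connected set `𝕌`. -/

open Matrix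

attribute [local instance] Matrix.normedAddCommGroup Matrix.normedSpace

noncomputable section

open Set Filter Topology

theorem ContDiffOn.hasDerivAt_deriv {F : Type*} [NormedAddCommGroup F] [NormedSpace ℝ F]
    {f : ℝ → F} {s : Set ℝ} {n : WithTop ℕ∞} (hf : ContDiffOn ℝ n f s) (hs : IsOpen s)
    (hn : n ≠ 0) {x : ℝ} (hx : x ∈ s) : HasDerivAt f (deriv f x) x :=
  ((hf.differentiableOn hn).differentiableAt (hs.mem_nhds hx)).hasDerivAt

theorem HasDerivAt.trace_mul {m n : Type*} [Fintype m] [Fintype n]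
    {A : ℝ → Matrix m n ℝ} {B : ℝ → Matrix n m ℝ} {A' : Matrix m n ℝ} {B' : Matrix n m ℝ}
    {x : ℝ} (hA : HasDerivAt A A' x) (hB : HasDerivAt B B' x) :
    HasDerivAt (fun u => (A u * B u).trace) ((A' * B x).trace + (A x * B').trace) x := by
  simp only [trace, diag, mul_apply, ← Finset.sum_add_distrib]
  exact HasDerivAt.fun_sum fun i _ => HasDerivAt.fun_sum fun j _ =>
    (hasDerivAt_pi.1 (hasDerivAt_pi.1 hA i) j).fun_mul (hasDerivAt_pi.1 (hasDerivAt_pi.1 hB j) i)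

theorem trace_mul_self_ne_zero {n : Type*} [Fintype n] {A : Matrix n n ℝ} (hA : Aᵀ = A)
    (h0 : A ≠ 0) : (A * A).trace ≠ 0 := by
  simpa [conjTranspose_eq_transpose_of_trivial, hA] using
    trace_conjTranspose_mul_self_eq_zero_iff.not.2 h0

theorem hasDerivAt_pow_four_mul_trace_mul_self {n : Type*} [Fintype n] {p : ℝ → Matrix n n ℝ}
    {p' W : Matrix n n ℝ} {w : ℝ → ℝ} {w' x : ℝ} (hp : HasDerivAt p p' x)
    (hw : HasDerivAt w w' x) (h : w x • p' + (2 * w') • p x + p x * W - W * p x = 0) :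
    HasDerivAt (fun u => w u ^ 4 * (p u * p u).trace) 0 x := by
  have hcomm : (p x * (p x * W)).trace = (p x * (W * p x)).trace := by
    rw [← Matrix.mul_assoc, ← Matrix.mul_assoc, trace_mul_cycle (p x) W]
  have htrace : w x * (p x * p').trace + 2 * w' * (p x * p x).trace = 0 := by
    have := congrArg (fun M => (p x * M).trace) h
    simpa only [Matrix.mul_sub, Matrix.mul_add, Matrix.mul_smul, trace_sub, trace_add,
      trace_smul, hcomm, add_sub_cancel_right, smul_eq_mul, Matrix.mul_zero, trace_zero] using this
  refine ((hw.fun_pow 4).fun_mul (hp.trace_mul hp)).congr_deriv ?_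
  rw [trace_mul_comm p']
  linear_combination (2 * w x ^ 3) * htrace

section LinearODE

variable {E : Type*} [NormedAddCommGroup E] [NormedSpace ℝ E]

theorem linear_ODE_solution_eventuallyEq_zero {A : ℝ → E →L[ℝ] E} {y : ℝ → E} {t₀ : ℝ}
    (hA : ContinuousAt A t₀) (hy : ∀ᶠ t in 𝓝 t₀, HasDerivAt y (A t (y t)) t) (hy₀ : y t₀ = 0) :
    y =ᶠ[𝓝 t₀] 0 := by
  have hlip : ∀ᶠ t in 𝓝 t₀, LipschitzOnWith (‖A t₀‖₊ + 1) (A t) univ := by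
    filter_upwards [hA.nnnorm.eventually (gt_mem_nhds (lt_add_one _))] with t ht
    exact ((A t).lipschitz.weaken ht.le).lipschitzOnWith
  refine ODE_solution_unique_of_eventually (s := fun _ => univ) hlip
    (hy.mono fun t ht => ⟨ht, mem_univ _⟩) (Eventually.of_forall fun t => ⟨by simp, mem_univ _⟩) hy₀

theorem linear_ODE_solution_eqOn_zero {U : Set ℝ} (hUo : IsOpen U) (hUc : IsPreconnected U)
    {A : ℝ → E →L[ℝ] E} (hA : ContinuousOn A U) {y : ℝ → E}
    (hy : ∀ t ∈ U, HasDerivAt y (A t (y t)) t) {t₀ : ℝ} (ht₀ : t₀ ∈ U) (hy₀ : y t₀ = 0) :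
    EqOn y 0 U := by
  set V := U ∩ y ⁻¹' {0}
  have hVo : IsOpen V := isOpen_iff_mem_nhds.2 fun t ⟨htU, hyt⟩ => by
    have hU := hUo.mem_nhds htU
    filter_upwards [hU, linear_ODE_solution_eventuallyEq_zero (hA.continuousAt hU)
      (eventually_of_mem hU hy) hyt] with s hs hys using ⟨hs, hys⟩
  have hVc : closure V ∩ U ⊆ V := fun t ⟨htV, htU⟩ => by
    refine ⟨htU, ?_⟩
    have := mem_closure_image (hy t htU).continuousAt htV
    simpa using closure_mono (image_subset_iff.2 inter_subset_right) this
  exact fun t ht => (hUc.subset_of_closure_inter_subset hVo ⟨t₀, ht₀, ht₀, hy₀⟩ hVc ht).2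

end LinearODE

theorem third_order_linear_ODE_solution_eqOn_zero {U : Set ℝ} (hUo : IsOpen U)
    (hUc : IsPreconnected U) {a b c w : ℝ → ℝ} (ha : ContinuousOn a U) (hb : ContinuousOn b U)
    (hc : ContinuousOn c U) (hw : ContDiffOn ℝ 3 w U)
    (hode : ∀ t ∈ U, deriv (deriv (deriv w)) t + a t * deriv (deriv w) t + b t * deriv w t
      + c t * w t = 0)
    {t₀ : ℝ} (ht₀ : t₀ ∈ U) (h₀ : w t₀ = 0) (h₁ : deriv w t₀ = 0) (h₂ : deriv (deriv w) t₀ = 0) :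
    EqOn w 0 U := by
  let M : ℝ → Matrix (Fin 3) (Fin 3) ℝ := fun t => !![0, 1, 0; 0, 0, 1; -c t, -b t, -a t]
  let toCLM : Matrix (Fin 3) (Fin 3) ℝ →ₗ[ℝ] (Fin 3 → ℝ) →L[ℝ] (Fin 3 → ℝ) :=
    LinearMap.toContinuousLinearMap.toLinearMap ∘ₗ Matrix.toLin'.toLinearMap
  have hM : ContinuousOn M U := by
    refine continuousOn_pi.2 fun i => continuousOn_pi.2 fun j => ?_
    fin_cases i <;> fin_cases j <;> simp [M] <;> fun_prop
  have hw' : ContDiffOn ℝ 2 (deriv w) U := hw.deriv_of_isOpen hUo (by norm_num)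
  have hw'' : ContDiffOn ℝ 1 (deriv (deriv w)) U := hw'.deriv_of_isOpen hUo (by norm_num)
  set y : ℝ → Fin 3 → ℝ := fun t => ![w t, deriv w t, deriv (deriv w) t]
  have hMv (t : ℝ) (v : Fin 3 → ℝ) :
      toCLM (M t) v = ![v 1, v 2, -c t * v 0 - b t * v 1 - a t * v 2] := by
    ext i; fin_cases i <;> simp [toCLM, M, vecHead, vecTail]; ring
  have hy (t : ℝ) (ht : t ∈ U) : HasDerivAt y (toCLM (M t) (y t)) t := by
    rw [hMv]
    refine hasDerivAt_pi.2 fun i => ?_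
    fin_cases i
    · exact hw.hasDerivAt_deriv hUo (by norm_num) ht
    · exact hw'.hasDerivAt_deriv hUo (by norm_num) ht
    · refine (hw''.hasDerivAt_deriv hUo (by norm_num) ht).congr_deriv ?_
      show _ = -c t * w t - b t * deriv w t - a t * deriv (deriv w) t
      linarith [hode t ht]
  have hy₀ : y t₀ = 0 := by
    ext i; fin_cases i <;> simp [y, h₀, h₁, h₂]
  intro t ht
  simpa [y] using congrFun (linear_ODE_solution_eqOn_zero hUo hUc
    (toCLM.continuous_of_finiteDimensional.comp_continuousOn hM) hy ht₀ hy₀ ht) 0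

theorem stmt18_general (n : ℕ)
    (U : Set ℝ) (hUopen : IsOpen U) (hUconv : Convex ℝ U)
    (ptil : ℝ → Matrix (Fin n) (Fin n) ℝ)
    (hptsmooth : ContDiffOn ℝ (⊤ : ℕ∞) ptil U)
    (hptsymm : ∀ u ∈ U, (ptil u)ᵀ = ptil u)
    (W : Matrix (Fin n) (Fin n) ℝ)
    (w : ℝ → ℝ) (hwsmooth : ContDiffOn ℝ (⊤ : ℕ∞) w U)
    (heq : ∀ u ∈ U, w u • deriv ptil u + (2 * deriv w u) • ptil u
      + ptil u * W - W * ptil u = 0) :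
    (∃ c : ℝ, ∀ u ∈ U, w u ^ 4 * (ptil u * ptil u).trace = c) ∧
    (∀ P : ℝ → ℝ, ContDiffOn ℝ (⊤ : ℕ∞) P U →
      (∀ u ∈ U, deriv (deriv (deriv w)) u
        + 4 * P u * deriv w u + 2 * deriv P u * w u = 0) →
      ∀ U₀ : Set ℝ, U₀ ⊆ U → IsOpen U₀ → U₀.Nonempty →
      (∀ u ∈ U₀, ptil u ≠ 0) →
      (∀ u ∈ U, w u ^ 4 * (ptil u * ptil u).trace = 0) →
      ∀ u ∈ U, w u = 0) := by
  have hconst (u : ℝ) (hu : u ∈ U) :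
      HasDerivAt (fun u => w u ^ 4 * (ptil u * ptil u).trace) 0 u :=
    hasDerivAt_pow_four_mul_trace_mul_self (hptsmooth.hasDerivAt_deriv hUopen (by simp) hu)
      (hwsmooth.hasDerivAt_deriv hUopen (by simp) hu) (heq u hu)
  refine ⟨hUopen.exists_is_const_of_deriv_eq_zero hUconv.isPreconnected
    (fun u hu => (hconst u hu).differentiableAt.differentiableWithinAt)
    (fun u hu => (hconst u hu).deriv), ?_⟩
  intro P hP hode U₀ hU₀U hU₀open ⟨u₀, hu₀⟩ hptne hzero
  have hw_U₀ (u : ℝ) (hu : u ∈ U₀) : w u = 0 :=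
    pow_eq_zero_iff four_ne_zero |>.1 <| (mul_eq_zero.1 (hzero u (hU₀U hu))).resolve_right <|
      trace_mul_self_ne_zero (hptsymm u (hU₀U hu)) (hptne u hu)
  have hw_near : w =ᶠ[𝓝 u₀] 0 := eventually_of_mem (hU₀open.mem_nhds hu₀) hw_U₀
  exact third_order_linear_ODE_solution_eqOn_zero hUopen hUconv.isPreconnected
    (a := fun _ => 0) (b := fun t => 4 * P t) (c := fun t => 2 * deriv P t) continuousOn_const
    (continuousOn_const.mul hP.continuousOn)
    (continuousOn_const.mul (hP.continuousOn_deriv_of_isOpen hUopen (by simp)))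
    (hwsmooth.of_le (WithTop.coe_le_coe.2 le_top)) (fun t ht => by linarith [hode t ht])
    (hU₀U hu₀) hw_near.eq_of_nhds
    (by simpa using hw_near.deriv.eq_of_nhds) (by simpa using hw_near.deriv.deriv.eq_of_nhds)

/-- if `wp̃' + 2w'p̃ + p̃W − Wp̃ = 0` with `p̃` trace-free symmetric and `W`
constant skew, then `w⁴·tr(p̃²)` is constant; and if moreover `w''' + 4Pw' + 2P'w = 0`,
`p̃` is nonvanishing on some nonempty open subinterval, and the constant value is zero,
then `w ≡ 0` on `𝕌`. -/
theorem stmt18 (n : ℕ) (hn : 1 ≤ n)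
    (U : Set ℝ) (hUopen : IsOpen U) (hUconv : Convex ℝ U) (hUne : U.Nonempty)
    (ptil : ℝ → Matrix (Fin n) (Fin n) ℝ)
    (hptsmooth : ContDiffOn ℝ (⊤ : ℕ∞) ptil U)
    (hptsymm : ∀ u ∈ U, (ptil u)ᵀ = ptil u)
    (hpttr : ∀ u ∈ U, (ptil u).trace = 0)
    (W : Matrix (Fin n) (Fin n) ℝ) (hW : Wᵀ = -W)
    (w : ℝ → ℝ) (hwsmooth : ContDiffOn ℝ (⊤ : ℕ∞) w U)
    (heq : ∀ u ∈ U, w u • deriv ptil u + (2 * deriv w u) • ptil u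
      + ptil u * W - W * ptil u = 0) :
    (∃ c : ℝ, ∀ u ∈ U, w u ^ 4 * (ptil u * ptil u).trace = c) ∧
    (∀ P : ℝ → ℝ, ContDiffOn ℝ (⊤ : ℕ∞) P U →
      (∀ u ∈ U, deriv (deriv (deriv w)) u
        + 4 * P u * deriv w u + 2 * deriv P u * w u = 0) →
      ∀ U₀ : Set ℝ, U₀ ⊆ U → IsOpen U₀ → U₀.Nonempty →
      (∀ u ∈ U₀, ptil u ≠ 0) →
      (∀ u ∈ U, w u ^ 4 * (ptil u * ptil u).trace = 0) →
      ∀ u ∈ U, w u = 0) :=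
  stmt18_general n U hUopen hUconv ptil hptsmooth hptsymm W w hwsmooth heq
end
end
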